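/- Let e be an isometry of the hyperbolic plane ℍ (a bijective distance-preserving map ℍ → ℍ), let o ∈ ℍ, R ≥ 0, μ ≥ 0, and let p ∈ ℍ satisfy dist(o,p) ≤ R, dist(o, e(p)) ≤ R, dist(o, e⁻¹(p)) ≤ R, and dist(o,p) ≥ R − μ. If m is a midpoint of p and e(p), then dist(e⁻¹(m), m) ≤ μ + 45. -/

import Mathlib

/-!
In the hyperboloid model `cosh ∘ dist` is the Lorentz form, and if `m` is the midpoint of `u`
and `v` then `u + v = 2 cosh (dist u v / 2) • m` there. This gives the median identity
`cosh (dist x u) + cosh (dist x v) = 2 cosh (dist x m) cosh (dist u v / 2)` for every `x`.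

With `L = dist p (e p)`, both `m` and `e⁻¹ m` are midpoints of pairs of points in the ball of
radius `R` about `o`, so `cosh (dist o ·) * cosh (L / 2) ≤ cosh R` at both of them, while both
lie at distance `L / 2` from `p`. The median identities at `o` and `p` for the midpoint of `m`
and `e⁻¹ m` then give `cosh (dist o p) * cosh (dist m (e⁻¹ m) / 2) ^ 2 ≤ 2 cosh R`, and
`dist o p ≥ R - μ` turns this into `dist m (e⁻¹ m) ≤ μ + log 16`.
-/

open scoped UpperHalfPlane
open Real

def lorentzForm : LinearMap.BilinForm ℝ (Fin 3 → ℝ) :=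
  LinearMap.mk₂ ℝ (fun x y => x 0 * y 0 - x 1 * y 1 - x 2 * y 2)
    (fun _ _ _ => by simp only [Pi.add_apply]; ring)
    (fun _ _ _ => by simp only [Pi.smul_apply, smul_eq_mul]; ring)
    (fun _ _ _ => by simp only [Pi.add_apply]; ring)
    (fun _ _ _ => by simp only [Pi.smul_apply, smul_eq_mul]; ring)

lemma lorentzForm_apply (x y : Fin 3 → ℝ) :
    lorentzForm x y = x 0 * y 0 - x 1 * y 1 - x 2 * y 2 := rfl

lemma lorentzForm_comm (x y : Fin 3 → ℝ) : lorentzForm x y = lorentzForm y x := by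
  simp only [lorentzForm_apply]; ring

lemma eq_zero_of_lorentzForm_eq_zero {n d : Fin 3 → ℝ} (hn : lorentzForm n n = 1)
    (hd : lorentzForm d d = 0) (hdn : lorentzForm d n = 0) : d = 0 := by
  simp only [lorentzForm_apply] at hn hd hdn
  have h0 : d 0 ^ 2 + (d 1 * n 2 - d 2 * n 1) ^ 2 = 0 := by
    linear_combination (d 0 * n 0 + d 1 * n 1 + d 2 * n 2) * hdn - d 0 ^ 2 * hn
      - (n 1 ^ 2 + n 2 ^ 2) * hd
  have hd0 : d 0 = 0 := by nlinarith [sq_nonneg (d 1 * n 2 - d 2 * n 1)]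
  have hd12 : d 1 ^ 2 + d 2 ^ 2 = 0 := by rw [hd0] at hd; linarith
  have hd1 : d 1 = 0 := by nlinarith [sq_nonneg (d 2)]
  have hd2 : d 2 = 0 := by nlinarith [sq_nonneg (d 1)]
  ext i; fin_cases i <;> assumption

lemma cosh_dist_le_two_mul_cosh_dist_mul_cosh_dist {X : Type*} [PseudoMetricSpace X]
    (x y z : X) : cosh (dist x z) ≤ 2 * cosh (dist x y) * cosh (dist y z) := calc
  cosh (dist x z) ≤ cosh (dist x y + dist y z) :=
    cosh_le_cosh.2 (abs_le_abs_of_nonneg dist_nonneg (dist_triangle x y z))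
  _ ≤ cosh (dist x y + dist y z) + cosh (dist x y - dist y z) := by
    linarith [cosh_pos (dist x y - dist y z)]
  _ = 2 * cosh (dist x y) * cosh (dist y z) := by rw [cosh_add, cosh_sub]; ring

lemma two_mul_le_add_log_sixteen_of_cosh_mul_cosh_sq_le {a s R μ : ℝ} (hR : 0 ≤ R)
    (ha : R - μ ≤ a) (h : cosh a * cosh s ^ 2 ≤ 2 * cosh R) : 2 * s ≤ μ + log 16 := by
  have hexp_le_cosh (x : ℝ) : exp x ≤ 2 * cosh x := by rw [cosh_eq]; linarith [exp_pos (-x)]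
  have hcosh_R : cosh R ≤ exp R := by
    rw [cosh_eq]; linarith [exp_le_exp.2 (neg_le_self hR)]
  have hs : exp (2 * s) ≤ 4 * cosh s ^ 2 := by
    rw [two_mul, exp_add]
    nlinarith [hexp_le_cosh s, exp_pos s]
  have : exp (2 * s - μ) * exp R ≤ 16 * exp R := calc
    exp (2 * s - μ) * exp R = exp (R - μ) * exp (2 * s) := by
      rw [← exp_add, ← exp_add]; ring_nf
    _ ≤ (2 * cosh a) * (4 * cosh s ^ 2) := by
      gcongr
      exact (exp_le_exp.2 ha).trans (hexp_le_cosh a)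
    _ = 8 * (cosh a * cosh s ^ 2) := by ring
    _ ≤ 16 * exp R := by linarith
  rw [← sub_le_iff_le_add', le_log_iff_exp_le (by norm_num)]
  exact le_of_mul_le_mul_right this (exp_pos R)

namespace UpperHalfPlane

/-- The isometry onto the sheet `x₀ > 0` of the hyperboloid `lorentzForm x x = 1`. -/
noncomputable def toHyperboloid (z : ℍ) : Fin 3 → ℝ :=
  ![(z.re ^ 2 + z.im ^ 2 + 1) / (2 * z.im), z.re / z.im, (z.re ^ 2 + z.im ^ 2 - 1) / (2 * z.im)]

lemma toHyperboloid_zero_pos (z : ℍ) : 0 < toHyperboloid z 0 := by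
  have := z.im_pos
  simp only [toHyperboloid, Matrix.cons_val_zero]; positivity

lemma lorentzForm_toHyperboloid (z w : ℍ) :
    lorentzForm (toHyperboloid z) (toHyperboloid w) = cosh (dist z w) := by
  have := z.im_pos.ne'
  have := w.im_pos.ne'
  simp only [cosh_dist', lorentzForm_apply, toHyperboloid, Matrix.cons_val_zero,
    Matrix.cons_val_one, Matrix.cons_val_two, Matrix.head_cons, Matrix.tail_cons]
  field_simp; ring

lemma lorentzForm_toHyperboloid_self (z : ℍ) :
    lorentzForm (toHyperboloid z) (toHyperboloid z) = 1 := by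
  rw [lorentzForm_toHyperboloid, dist_self, cosh_zero]

noncomputable def ofHyperboloid (A : Fin 3 → ℝ) (hA : 0 < A 0 - A 2) : ℍ :=
  mk ⟨A 1 / (A 0 - A 2), 1 / (A 0 - A 2)⟩ (one_div_pos.mpr hA)

lemma toHyperboloid_ofHyperboloid {A : Fin 3 → ℝ} (hA : 0 < A 0 - A 2)
    (h : lorentzForm A A = 1) : toHyperboloid (ofHyperboloid A hA) = A := by
  rw [lorentzForm_apply] at h
  have := hA.ne'
  ext i
  fin_cases i <;> simp [toHyperboloid, ofHyperboloid, mk_re, mk_im] <;> field_simp <;>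
    linear_combination (-1) * h

lemma lorentzForm_toHyperboloid_eq_two_mul_cosh_half_sq_sub_one (u v : ℍ) :
    lorentzForm (toHyperboloid u) (toHyperboloid v) = 2 * cosh (dist u v / 2) ^ 2 - 1 := by
  have h := cosh_two_mul (dist u v / 2)
  rw [mul_div_cancel₀ _ two_ne_zero] at h
  rw [lorentzForm_toHyperboloid]
  linear_combination h - cosh_sq (dist u v / 2)

lemma exists_midpoint (u v : ℍ) :
    ∃ n : ℍ, dist u n = dist u v / 2 ∧ dist n v = dist u v / 2 := by
  have huv := lorentzForm_toHyperboloid_eq_two_mul_cosh_half_sq_sub_one u v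
  have hvu := lorentzForm_comm (toHyperboloid v) (toHyperboloid u)
  set c := cosh (dist u v / 2)
  have hc : 0 < c := cosh_pos _
  set A := (2 * c)⁻¹ • (toHyperboloid u + toHyperboloid v)
  have hAA : lorentzForm A A = 1 := by
    simp only [A, map_smul, map_add, LinearMap.smul_apply, LinearMap.add_apply, smul_eq_mul,
      lorentzForm_toHyperboloid_self, huv, hvu]
    field_simp; ring
  have hA : 0 < A 0 - A 2 := by
    have hA0 : 0 < A 0 := by
      have := toHyperboloid_zero_pos u; have := toHyperboloid_zero_pos v
      simp only [A, Pi.smul_apply, Pi.add_apply, smul_eq_mul]; positivity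
    rw [lorentzForm_apply] at hAA; nlinarith [sq_nonneg (A 1)]
  have hn : toHyperboloid (ofHyperboloid A hA) = A := toHyperboloid_ofHyperboloid hA hAA
  have hun : cosh (dist u (ofHyperboloid A hA)) = c := by
    rw [← lorentzForm_toHyperboloid, hn]
    simp only [A, map_smul, map_add, smul_eq_mul, lorentzForm_toHyperboloid_self, huv]
    field_simp; ring
  have hnv : cosh (dist (ofHyperboloid A hA) v) = c := by
    rw [← lorentzForm_toHyperboloid, hn]
    simp only [A, map_smul, map_add, LinearMap.smul_apply, LinearMap.add_apply, smul_eq_mul,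
      lorentzForm_toHyperboloid_self, huv]
    field_simp; ring
  have hr : (0 : ℝ) ≤ dist u v / 2 := by positivity
  exact ⟨_, cosh_injOn dist_nonneg hr hun, cosh_injOn dist_nonneg hr hnv⟩

/-- `u + v - 2 cosh (dist u v / 2) • m` is null and orthogonal to the unit vector `m`. -/
lemma toHyperboloid_add_toHyperboloid_of_midpoint {u v m : ℍ} (hum : dist u m = dist u v / 2)
    (hmv : dist m v = dist u v / 2) :
    toHyperboloid u + toHyperboloid v = (2 * cosh (dist u v / 2)) • toHyperboloid m := by
  have huv := lorentzForm_toHyperboloid_eq_two_mul_cosh_half_sq_sub_one u v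
  have hvu := lorentzForm_comm (toHyperboloid v) (toHyperboloid u)
  have hum' : lorentzForm (toHyperboloid u) (toHyperboloid m) = cosh (dist u v / 2) := by
    rw [lorentzForm_toHyperboloid, hum]
  have hvm : lorentzForm (toHyperboloid v) (toHyperboloid m) = cosh (dist u v / 2) := by
    rw [lorentzForm_toHyperboloid, dist_comm, hmv]
  have hmu := lorentzForm_comm (toHyperboloid m) (toHyperboloid u)
  have hmv' := lorentzForm_comm (toHyperboloid m) (toHyperboloid v)
  rw [← sub_eq_zero]
  apply eq_zero_of_lorentzForm_eq_zero (lorentzForm_toHyperboloid_self m)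
  · simp only [map_sub, map_add, map_smul, LinearMap.sub_apply, LinearMap.add_apply,
      LinearMap.smul_apply, smul_eq_mul, lorentzForm_toHyperboloid_self, huv, hvu, hum', hvm,
      hmu, hmv']
    ring
  · simp only [map_sub, map_add, map_smul, LinearMap.sub_apply, LinearMap.add_apply,
      LinearMap.smul_apply, smul_eq_mul, lorentzForm_toHyperboloid_self, hum', hvm]
    ring

lemma cosh_dist_add_cosh_dist_of_midpoint (x : ℍ) {u v m : ℍ} (hum : dist u m = dist u v / 2)
    (hmv : dist m v = dist u v / 2) :
    cosh (dist x u) + cosh (dist x v) = 2 * cosh (dist x m) * cosh (dist u v / 2) := by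
  simp only [← lorentzForm_toHyperboloid, ← map_add,
    toHyperboloid_add_toHyperboloid_of_midpoint hum hmv, map_smul, smul_eq_mul]
  ring

lemma cosh_dist_mul_cosh_half_dist_le_of_midpoint {o u v m : ℍ} {R : ℝ} (hu : dist o u ≤ R)
    (hv : dist o v ≤ R) (hum : dist u m = dist u v / 2) (hmv : dist m v = dist u v / 2) :
    cosh (dist o m) * cosh (dist u v / 2) ≤ cosh R := by
  have hu' : cosh (dist o u) ≤ cosh R := cosh_le_cosh.2 (abs_le_abs_of_nonneg dist_nonneg hu)
  have hv' : cosh (dist o v) ≤ cosh R := cosh_le_cosh.2 (abs_le_abs_of_nonneg dist_nonneg hv)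
  linarith [cosh_dist_add_cosh_dist_of_midpoint o hum hmv]

/-- Take the median identities at `p` and at `o` for the midpoint `n` of `m` and `m'`, and
`cosh (dist o p) ≤ 2 cosh (dist o n) cosh (dist n p)`. -/
lemma cosh_dist_mul_cosh_half_dist_sq_le {o p m m' : ℍ} {r C : ℝ} (hm : dist p m = r)
    (hm' : dist p m' = r) (hom : cosh (dist o m) * cosh r ≤ C)
    (hom' : cosh (dist o m') * cosh r ≤ C) :
    cosh (dist o p) * cosh (dist m m' / 2) ^ 2 ≤ 2 * C := by
  obtain ⟨n, hmn, hnm'⟩ := exists_midpoint m m'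
  have hp : cosh (dist p n) * cosh (dist m m' / 2) = cosh r := by
    have h := cosh_dist_add_cosh_dist_of_midpoint p hmn hnm'
    rw [hm, hm'] at h
    linarith
  have ho := cosh_dist_add_cosh_dist_of_midpoint o hmn hnm'
  have htri := cosh_dist_le_two_mul_cosh_dist_mul_cosh_dist o n p
  rw [dist_comm n p] at htri
  have : 0 ≤ cosh (dist m m' / 2) ^ 2 := sq_nonneg _
  calc cosh (dist o p) * cosh (dist m m' / 2) ^ 2
      ≤ 2 * cosh (dist o n) * cosh (dist p n) * cosh (dist m m' / 2) ^ 2 := by gcongr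
    _ = (cosh (dist o m) + cosh (dist o m')) * cosh r := by rw [ho, ← hp]; ring
    _ ≤ 2 * C := by linarith

end UpperHalfPlane

open UpperHalfPlane

theorem delzant_lemma_general (e : ℍ ≃ᵢ ℍ) (o : ℍ) (R μ : ℝ)
    (p : ℍ) (hp : dist o p ≤ R) (hep : dist o (e p) ≤ R) (heinvp : dist o (e.symm p) ≤ R)
    (hpμ : R - μ ≤ dist o p)
    (m : ℍ) (hpm : dist p m = dist p (e p) / 2) (hmep : dist m (e p) = dist p (e p) / 2) :
    dist (e.symm m) m ≤ μ + 45 := by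
  have hd : dist (e.symm p) p = dist p (e p) := by rw [← e.dist_eq, e.apply_symm_apply]
  have hpm' : dist p (e.symm m) = dist p (e p) / 2 := by
    rw [dist_comm, ← e.dist_eq, e.apply_symm_apply, hmep]
  have hom := cosh_dist_mul_cosh_half_dist_le_of_midpoint hp hep hpm hmep
  have hom' := cosh_dist_mul_cosh_half_dist_le_of_midpoint heinvp hp
    (m := e.symm m) (by rw [e.symm.dist_eq, hd, hpm]) (by rw [hd, dist_comm, hpm'])
  rw [hd] at hom'
  have hmm' := two_mul_le_add_log_sixteen_of_cosh_mul_cosh_sq_le (dist_nonneg.trans hp) hpμ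
    (cosh_dist_mul_cosh_half_dist_sq_le hpm hpm' hom hom')
  have hlog : log 16 ≤ 45 := by linarith [log_le_sub_one_of_pos (by norm_num : (0 : ℝ) < 16)]
  rw [dist_comm]
  linarith

/-- Delzant's lemma in the hyperbolic plane with `δ = 5`: if `p`, `e p` and `e⁻¹ p` all lie
in `closedBall o R` and `p` is in the `μ`-neighborhood of the boundary, then the midpoint
`m` of `p` and `e p` is moved at most `μ + 45` by `e⁻¹`. -/
theorem delzant_lemma (e : ℍ ≃ᵢ ℍ) (o : ℍ) (R μ : ℝ) (hR : 0 ≤ R) (hμ : 0 ≤ μ)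
    (p : ℍ) (hp : dist o p ≤ R) (hep : dist o (e p) ≤ R) (heinvp : dist o (e.symm p) ≤ R)
    (hpμ : R - μ ≤ dist o p)
    (m : ℍ) (hpm : dist p m = dist p (e p) / 2) (hmep : dist m (e p) = dist p (e p) / 2) :
    dist (e.symm m) m ≤ μ + 45 :=
  delzant_lemma_general e o R μ p hp hep heinvp hpμ m hpm hmep
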